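/- arXiv:math-ph/0409027 — 2 statements merged into one kernel-verified Lean document; each statement's English description precedes it below -/
import Mathlib

section
/- Let d ≥ 2, m > 0, and let p be a polynomial in d variables X_0, X_1, …, X_{d−1} with complex coefficients. Suppose the function q(k) = p(i·k_0, k_1, …, k_{d−1}) vanishes at every real point (k_0, …, k_{d−1}) with k_0^2 − (k_1^2 + ⋯ + k_{d−1}^2) = m^2. Then the polynomial X_0^2 + X_1^2 + ⋯ + X_{d−1}^2 + m^2 divides p in ℂ[X_0, …, X_{d−1}]. -/
open MvPolynomial

/-!
View `p` as a polynomial in `X₀` over `ℂ[X₁, …, X_{d-1}]`; the quadric becomes the monic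
`X₀² + c` with `c = X₁² + ⋯ + X_{d-1}² + m²`. Divisibility by a monic polynomial is the
vanishing of the remainder, and taking remainders commutes with specializing the coefficients,
so it suffices to check divisibility after evaluating `X₁, …, X_{d-1}` at every real point `k`:
a complex polynomial vanishing on all real points is zero. After this specialization
`c(k) = s²` with `s = √(m² + |k|²) > 0`, and the vanishing of `p` on the mass shell at `(±s, k)`
says exactly that `±i s` are roots, so `X₀² + s² = (X₀ - i s)(X₀ + i s)` divides.
-/

theorem MvPolynomial.eq_zero_of_forall_eval_comp_eq_zero {R σ α : Type*} [CommRing R]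
    [IsDomain R] [Infinite α] {f : α → R} (hf : Function.Injective f) {P : MvPolynomial σ R}
    (h : ∀ x : σ → α, eval (f ∘ x) P = 0) : P = 0 := by
  refine funext_set (fun _ => Set.range f) (fun _ => Set.infinite_range_of_injective hf)
    fun x hx => ?_
  choose y hy using fun i => hx i (Set.mem_univ i)
  obtain rfl : f ∘ y = x := _root_.funext hy
  simpa using h y

theorem Polynomial.dvd_of_forall_map_dvd {R S ι : Type*} [CommRing R] [CommRing S]
    {φ : ι → R →+* S} (hφ : ∀ a, (∀ i, φ i a = 0) → a = 0) {f q : Polynomial R}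
    (hq : q.Monic) (h : ∀ i, q.map (φ i) ∣ f.map (φ i)) : q ∣ f := by
  rw [← modByMonic_eq_zero_iff_dvd hq]
  ext j
  refine hφ _ fun i => ?_
  have hi := (modByMonic_eq_zero_iff_dvd (hq.map (φ i))).2 (h i)
  rw [← map_modByMonic _ hq] at hi
  simpa using congr(Polynomial.coeff $hi j)

theorem Polynomial.X_sq_sub_C_sq_dvd_of_isRoot {K : Type*} [Field K] [NeZero (2 : K)]
    {f : Polynomial K} {y : K} (hy : y ≠ 0) (hy₁ : f.IsRoot y) (hy₂ : f.IsRoot (-y)) :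
    X ^ 2 - C (y ^ 2) ∣ f := by
  have hfactor : X ^ 2 - C (y ^ 2) = (X - C y) * (X - C (-y)) := by
    rw [map_neg, map_pow]
    ring
  have hsub : y - -y ≠ 0 := by
    rw [sub_neg_eq_add, ← two_mul]
    exact mul_ne_zero two_ne_zero hy
  rw [hfactor]
  exact (isCoprime_X_sub_C_of_isUnit_sub hsub.isUnit).mul_dvd
    (dvd_iff_isRoot.2 hy₁) (dvd_iff_isRoot.2 hy₂)

theorem MvPolynomial.finSuccEquiv_sum_X_sq_add_C {R : Type*} [CommRing R] (n : ℕ) (a : R) :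
    finSuccEquiv R n (∑ i, X i ^ 2 + C a) =
      Polynomial.X ^ 2 + Polynomial.C (∑ i, X i ^ 2 + C a) := by
  simp [Fin.sum_univ_succ, finSuccEquiv_apply, add_assoc]

theorem Fin.sum_univ_erase_zero {M : Type*} [AddCommGroup M] {n : ℕ} (f : Fin (n + 1) → M) :
    ∑ i ∈ Finset.univ.erase 0, f i = ∑ i : Fin n, f i.succ := by
  rw [← add_right_inj (f 0), Finset.add_sum_erase _ _ (Finset.mem_univ 0), Fin.sum_univ_succ]

theorem eval_cons_I_mul_eq_zero {n : ℕ} {m : ℝ} {p : MvPolynomial (Fin (n + 1)) ℂ}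
    (hp : ∀ k : Fin (n + 1) → ℝ, k 0 ^ 2 - ∑ i ∈ Finset.univ.erase 0, k i ^ 2 = m ^ 2 →
      eval (fun i => if i = 0 then Complex.I * (k i : ℂ) else (k i : ℂ)) p = 0)
    {a : ℝ} {k : Fin n → ℝ} (ha : a ^ 2 = m ^ 2 + ∑ i, k i ^ 2) :
    eval (Fin.cons (Complex.I * a) fun i => (k i : ℂ)) p = 0 := by
  convert hp (Fin.cons a k) ?_ using 3
  · ext i
    cases i using Fin.cases <;> simp
  · simp only [Fin.sum_univ_erase_zero, Fin.cons_zero, Fin.cons_succ, ha]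
    ring

/-- If the Minkowski continuation `q(k) = p(i k₀, k₁, …, k_{d-1})` of a complex
polynomial `p` vanishes at every real point of the mass shell
`k₀² - (k₁² + ⋯ + k_{d-1}²) = m²`, then the Euclidean quadric
`X₀² + X₁² + ⋯ + X_{d-1}² + m²` divides `p` in `ℂ[X₀, …, X_{d-1}]`. -/
theorem euclidean_quadric_dvd_of_minkowski_vanishing
    (d : ℕ) (hd : 2 ≤ d) (m : ℝ) (hm : 0 < m) (p : MvPolynomial (Fin d) ℂ)
    (hp : ∀ k : Fin d → ℝ,
      (k ⟨0, by omega⟩) ^ 2 - ∑ i ∈ Finset.univ.erase ⟨0, by omega⟩, (k i) ^ 2 = m ^ 2 →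
      MvPolynomial.eval
        (fun i => if i = (⟨0, by omega⟩ : Fin d) then Complex.I * (k i : ℂ)
          else (k i : ℂ)) p = 0) :
    ((∑ i : Fin d, X i ^ 2 + C ((m : ℂ) ^ 2) : MvPolynomial (Fin d) ℂ)) ∣ p := by
  obtain ⟨n, rfl⟩ : ∃ n, d = n + 1 := ⟨d - 1, by omega⟩
  rw [← map_dvd_iff (finSuccEquiv ℂ n), finSuccEquiv_sum_X_sq_add_C]
  refine Polynomial.dvd_of_forall_map_dvd (φ := fun k : Fin n → ℝ => eval fun i => (k i : ℂ))
    (fun P hP => eq_zero_of_forall_eval_comp_eq_zero Complex.ofReal_injective hP)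
    (Polynomial.monic_X_pow_add_C _ two_ne_zero) fun k => ?_
  obtain ⟨s, hs, hs2⟩ : ∃ s : ℝ, 0 < s ∧ s ^ 2 = m ^ 2 + ∑ i, k i ^ 2 :=
    ⟨_, Real.sqrt_pos.2 (by positivity), Real.sq_sqrt (by positivity)⟩
  have hroot (a : ℝ) (ha : a ^ 2 = s ^ 2) :
      ((finSuccEquiv ℂ n p).map (eval fun i => (k i : ℂ))).IsRoot (Complex.I * a) := by
    rw [Polynomial.IsRoot, ← eval_eq_eval_mv_eval']
    exact eval_cons_I_mul_eq_zero hp (ha.trans hs2)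
  have hquadric : (Polynomial.X ^ 2 + Polynomial.C (∑ i, X i ^ 2 + C ((m : ℂ) ^ 2))).map
      (eval fun i => (k i : ℂ)) = Polynomial.X ^ 2 - Polynomial.C ((Complex.I * s) ^ 2) := by
    have hc : eval (fun i => (k i : ℂ)) (∑ i, X i ^ 2 + C ((m : ℂ) ^ 2)) = (s : ℂ) ^ 2 := by
      simp only [map_add, map_sum, map_pow, eval_X, eval_C]
      exact_mod_cast (hs2.trans (add_comm _ _)).symm
    rw [Polynomial.map_add, Polynomial.map_pow, Polynomial.map_X, Polynomial.map_C, hc, mul_pow,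
      Complex.I_sq, neg_one_mul, map_neg, sub_neg_eq_add]
  rw [hquadric]
  refine Polynomial.X_sq_sub_C_sq_dvd_of_isRoot (by simpa using hs.ne') (hroot s rfl) ?_
  simpa using hroot (-s) (neg_sq s)
end

section
/- Let g : ℝ → ℂ be a Schwartz function with g(0) ≠ 0, let R ≥ 1 be an integer, and for t ∈ ℝ let P(t) = lim_{ε → 0⁺} ∫_{|s| ≥ ε} e^{ist} g(s)/s ds (which exists for every t). Then |t^R · P(t)| tends to +∞ as t → +∞. -/
open MeasureTheory Filter Complex Real Set

noncomputable section PVDivAux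

namespace PVDiv

def S (ε : ℝ) : Set ℝ := {s : ℝ | ε ≤ |s|}

lemma measurableSet_S (ε : ℝ) : MeasurableSet (S ε) :=
  (isClosed_le continuous_const _root_.continuous_abs).measurableSet

lemma ae_ne_zero : ∀ᵐ s : ℝ, s ≠ 0 := by
  have h : {s : ℝ | ¬ s ≠ 0} = {0} := by ext s; simp
  rw [MeasureTheory.ae_iff, h]
  exact Real.volume_singleton

lemma norm_cexp_neg_sq (s : ℝ) : ‖cexp (-(s:ℂ)^2)‖ = rexp (-s^2) := by
  have h : (-(s:ℂ)^2) = ((-s^2 : ℝ) : ℂ) := by push_cast; ring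
  rw [h, Complex.norm_exp_ofReal]

lemma integrable_gauss : Integrable (fun s : ℝ => rexp (-s^2)) := by
  simpa using integrable_exp_neg_mul_sq one_pos

lemma integrable_gauss4 : Integrable (fun s : ℝ => rexp (-s^2/4)) := by
  have := integrable_exp_neg_mul_sq (show (0:ℝ) < 1/4 by norm_num)
  refine this.congr (Eventually.of_forall fun s => ?_)
  ring_nf

def psi (g : SchwartzMap ℝ ℂ) (s : ℝ) : ℂ := (g s - g 0 * cexp (-(s:ℂ)^2)) / s

def psiC (g : SchwartzMap ℝ ℂ) (s : ℝ) : ℂ :=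
  if s = 0 then deriv (⇑g) 0 else psi g s

def kf (t s : ℝ) : ℂ := (cexp (Complex.I*s*t) - 1) * cexp (-(s:ℂ)^2) / s

lemma hasDerivAt_ofReal (x : ℝ) : HasDerivAt (fun s : ℝ => (s:ℂ)) 1 x := by
  exact Complex.ofRealCLM.hasDerivAt (x := x)

lemma hasDerivAt_gauss : HasDerivAt (fun s : ℝ => cexp (-(s:ℂ)^2)) 0 0 := by
  have h1 : HasDerivAt (fun s : ℝ => -(s:ℂ)^2) 0 0 := by
    have h0 := ((hasDerivAt_ofReal 0).mul (hasDerivAt_ofReal 0)).neg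
    have h2 : (fun s : ℝ => -(s:ℂ)^2) = fun s : ℝ => -((s:ℂ) * (s:ℂ)) := by funext s; ring
    rw [h2]
    refine h0.congr_deriv ?_
    norm_num
  simpa using h1.cexp

lemma hasDerivAt_F (g : SchwartzMap ℝ ℂ) :
    HasDerivAt (fun s : ℝ => g s - g 0 * cexp (-(s:ℂ)^2)) (deriv (⇑g) 0) 0 := by
  have h1 : HasDerivAt (⇑g) (deriv (⇑g) 0) 0 := (g.differentiable 0).hasDerivAt
  have h2 := hasDerivAt_gauss.const_mul (g 0)
  refine (h1.sub h2).congr_deriv ?_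
  simp

lemma continuous_psiC (g : SchwartzMap ℝ ℂ) : Continuous (psiC g) := by
  have hFcont : Continuous (fun s : ℝ => g s - g 0 * cexp (-(s:ℂ)^2)) :=
    g.continuous.sub (continuous_const.mul ((Complex.continuous_ofReal.pow 2).neg.cexp))
  rw [continuous_iff_continuousAt]
  intro x
  rcases eq_or_ne x 0 with rfl | hx
  · have hslope := hasDerivAt_iff_tendsto_slope.mp (hasDerivAt_F g)
    have hpsi : Tendsto (psi g) (nhdsWithin (0:ℝ) {(0:ℝ)}ᶜ) (nhds (deriv (⇑g) 0)) := by
      refine hslope.congr' ?_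
      filter_upwards [self_mem_nhdsWithin] with s hs
      have hs0 : s ≠ 0 := hs
      have hF0 : (g 0 : ℂ) - g 0 * cexp (-((0:ℝ):ℂ)^2) = 0 := by
        simp
      simp only [slope, vsub_eq_sub, sub_zero, psi]
      rw [hF0, sub_zero, Complex.real_smul]
      push_cast
      rw [inv_mul_eq_div]
    unfold ContinuousAt
    rw [← nhdsNE_sup_pure (0:ℝ), tendsto_sup]
    constructor
    · have hev : ∀ᶠ s in nhdsWithin (0:ℝ) {(0:ℝ)}ᶜ, psi g s = psiC g s := by
        filter_upwards [self_mem_nhdsWithin] with s hs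
        simp [psiC, (show s ≠ 0 from hs)]
      have : psiC g 0 = deriv (⇑g) 0 := by simp [psiC]
      rw [this]
      exact hpsi.congr' hev
    · exact tendsto_pure_nhds (psiC g) 0
  · have hev : psiC g =ᶠ[nhds x] psi g := by
      filter_upwards [isOpen_compl_singleton.mem_nhds hx] with s hs
      simp [psiC, (show s ≠ 0 from hs)]
    have hcont : ContinuousAt (psi g) x := by
      apply ContinuousAt.div hFcont.continuousAt Complex.continuous_ofReal.continuousAt
      exact Complex.ofReal_ne_zero.mpr hx
    exact hcont.congr hev.symm

lemma psi_ae (g : SchwartzMap ℝ ℂ) : psi g =ᵐ[volume] psiC g := by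
  filter_upwards [ae_ne_zero] with s hs
  simp [psiC, hs]

lemma integrable_psiC (g : SchwartzMap ℝ ℂ) : Integrable (psiC g) := by
  have h1 : IntegrableOn (psiC g) (Icc (-1:ℝ) 1) := (continuous_psiC g).integrableOn_Icc
  have hmeas : MeasurableSet {s : ℝ | 1 ≤ |s|} := measurableSet_S 1
  have h2 : IntegrableOn (psiC g) {s : ℝ | 1 ≤ |s|} := by
    have hdom : Integrable (fun s : ℝ => ‖g s‖ + ‖g 0‖ * rexp (-s^2)) :=
      g.integrable.norm.add (integrable_gauss.const_mul _)
    refine Integrable.mono' hdom.integrableOn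
      (continuous_psiC g).aestronglyMeasurable.restrict ?_
    rw [ae_restrict_iff' hmeas]
    filter_upwards with s hs
    have h1le : (1:ℝ) ≤ |s| := hs
    have hs0 : s ≠ 0 := by
      intro h; rw [h] at h1le; simp at h1le; linarith
    simp only [psiC, hs0, if_false, psi]
    rw [norm_div, Complex.norm_real, Real.norm_eq_abs]
    calc ‖g s - g 0 * cexp (-(s:ℂ)^2)‖ / |s|
        ≤ ‖g s - g 0 * cexp (-(s:ℂ)^2)‖ := div_le_self (norm_nonneg _) h1le
      _ ≤ ‖g s‖ + ‖g 0 * cexp (-(s:ℂ)^2)‖ := norm_sub_le _ _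
      _ = ‖g s‖ + ‖g 0‖ * rexp (-s^2) := by rw [norm_mul, norm_cexp_neg_sq]
  have hun : Icc (-1:ℝ) 1 ∪ {s : ℝ | 1 ≤ |s|} = univ := by
    ext s
    simp only [mem_union, mem_Icc, mem_setOf_eq, mem_univ, iff_true]
    rcases le_or_gt 1 |s| with h | h
    · right; exact h
    · left; rcases abs_lt.mp h with ⟨h1, h2⟩; constructor <;> linarith
  have h3 := h1.union h2
  rw [hun] at h3
  rwa [integrableOn_univ] at h3

lemma norm_cexp_I_mul (x : ℝ) : ‖cexp ((x:ℂ) * Complex.I)‖ = 1 := by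
  rw [Complex.norm_exp_ofReal_mul_I]

lemma norm_cexp_Ist (s t : ℝ) : ‖cexp (Complex.I*s*t)‖ = 1 := by
  have h : Complex.I*(s:ℂ)*(t:ℂ) = ((s*t : ℝ):ℂ) * Complex.I := by push_cast; ring
  rw [h]; exact norm_cexp_I_mul _

lemma kf_eq_intervalIntegral (t : ℝ) {s : ℝ} (hs : s ≠ 0) :
    kf t s = ∫ u in (0:ℝ)..t, Complex.I * cexp (Complex.I*s*u) * cexp (-(s:ℂ)^2) := by
  have hsC : (s:ℂ) ≠ 0 := Complex.ofReal_ne_zero.mpr hs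
  have hderiv : ∀ u ∈ uIcc (0:ℝ) t,
      HasDerivAt (fun u : ℝ => cexp (Complex.I*s*u) * cexp (-(s:ℂ)^2) / s)
        (Complex.I * cexp (Complex.I*s*u) * cexp (-(s:ℂ)^2)) u := by
    intro u _
    have h1 : HasDerivAt (fun u : ℝ => Complex.I*(s:ℂ)*(u:ℂ)) (Complex.I*s) u := by
      simpa using (hasDerivAt_ofReal u).const_mul (Complex.I*(s:ℂ))
    have h3 := (h1.cexp.mul_const (cexp (-(s:ℂ)^2))).div_const ((s:ℂ))
    refine h3.congr_deriv ?_
    field_simp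
  have hint : IntervalIntegrable
      (fun u : ℝ => Complex.I * cexp (Complex.I*s*u) * cexp (-(s:ℂ)^2)) volume 0 t := by
    apply Continuous.intervalIntegrable
    fun_prop
  rw [intervalIntegral.integral_eq_sub_of_hasDerivAt hderiv hint]
  unfold kf
  rw [show ((0:ℝ):ℂ) = 0 from rfl]
  simp only [Complex.ofReal_zero, mul_zero, Complex.exp_zero]
  field_simp

lemma norm_aux (s u : ℝ) : ‖Complex.I * cexp (Complex.I*s*u) * cexp (-(s:ℂ)^2)‖ = rexp (-s^2) := by
  rw [norm_mul, norm_mul, Complex.norm_I, norm_cexp_Ist, norm_cexp_neg_sq]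
  ring

lemma norm_kf_le (t s : ℝ) : ‖kf t s‖ ≤ |t| * rexp (-s^2) := by
  rcases eq_or_ne s 0 with rfl | hs
  · simp only [kf, Complex.ofReal_zero, mul_zero, zero_mul, Complex.exp_zero, sub_self,
      zero_mul, zero_div, norm_zero]
    positivity
  · rw [kf_eq_intervalIntegral t hs]
    have hb : ∀ u ∈ Set.uIoc (0:ℝ) t,
        ‖Complex.I * cexp (Complex.I*s*u) * cexp (-(s:ℂ)^2)‖ ≤ rexp (-s^2) := by
      intro u _; rw [norm_aux]
    have := intervalIntegral.norm_integral_le_of_norm_le_const hb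
    calc ‖∫ u in (0:ℝ)..t, Complex.I * cexp (Complex.I*s*u) * cexp (-(s:ℂ)^2)‖
        ≤ rexp (-s^2) * |t - 0| := this
      _ = |t| * rexp (-s^2) := by rw [sub_zero, mul_comm]

lemma meas_kf (t : ℝ) : AEStronglyMeasurable (kf t) volume := by
  apply Measurable.aestronglyMeasurable
  unfold kf
  apply Measurable.div
  · apply Measurable.mul
    · exact (Complex.measurable_exp.comp
        ((measurable_const.mul Complex.measurable_ofReal).mul_const _)).sub measurable_const
    · exact Complex.measurable_exp.comp ((Complex.measurable_ofReal.pow_const 2).neg)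
  · exact Complex.measurable_ofReal

lemma integrable_kf (t : ℝ) : Integrable (kf t) := by
  refine Integrable.mono' (integrable_gauss.const_mul |t|) (meas_kf t) ?_
  filter_upwards with s
  exact norm_kf_le t s

lemma meas_odd : Measurable (fun s : ℝ => cexp (-(s:ℂ)^2) / (s:ℂ)) :=
  (Complex.measurable_exp.comp ((Complex.measurable_ofReal.pow_const 2).neg)).div
    Complex.measurable_ofReal

lemma integrableOn_odd {ε : ℝ} (hε : 0 < ε) :
    IntegrableOn (fun s : ℝ => cexp (-(s:ℂ)^2) / (s:ℂ)) (S ε) := by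
  refine Integrable.mono' (integrable_gauss.const_mul ε⁻¹).integrableOn
    meas_odd.aestronglyMeasurable.restrict ?_
  rw [ae_restrict_iff' (measurableSet_S ε)]
  filter_upwards with s hs
  have hsε : ε ≤ |s| := hs
  rw [norm_div, norm_cexp_neg_sq, Complex.norm_real, Real.norm_eq_abs]
  calc rexp (-s^2) / |s| ≤ rexp (-s^2) / ε :=
        div_le_div_of_nonneg_left (Real.exp_nonneg _) hε hsε
    _ = ε⁻¹ * rexp (-s^2) := by rw [div_eq_inv_mul]

lemma setIntegral_odd_zero {ε : ℝ} (hε : 0 < ε) :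
    ∫ s in S ε, cexp (-(s:ℂ)^2) / (s:ℂ) = 0 := by
  set o : ℝ → ℂ := fun s => cexp (-(s:ℂ)^2) / s with ho
  have hodd : ∀ s : ℝ, o (-s) = - o s := by
    intro s
    simp only [ho, Complex.ofReal_neg]
    rw [neg_sq, div_neg]
  have hSmem : ∀ s : ℝ, (-s ∈ S ε ↔ s ∈ S ε) := by
    intro s; simp [S, abs_neg]
  have h2 : (fun s => (S ε).indicator o (-s)) = fun s => - (S ε).indicator o s := by
    funext s
    by_cases hs : s ∈ S ε
    · rw [indicator_of_mem ((hSmem s).mpr hs), indicator_of_mem hs, hodd]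
    · rw [indicator_of_notMem (fun h => hs ((hSmem s).mp h)),
        indicator_of_notMem hs, neg_zero]
  have h3 := integral_neg_eq_self ((S ε).indicator o) volume
  rw [show (fun x : ℝ => (S ε).indicator o (-x)) = fun s => - (S ε).indicator o s from h2,
    integral_neg] at h3
  have h4 : ∫ s, (S ε).indicator o s = 0 := by
    have h5 : (∫ s, (S ε).indicator o s) + (∫ s, (S ε).indicator o s) = 0 := by
      nth_rewrite 1 [← h3]; rw [neg_add_cancel]
    exact add_self_eq_zero.mp h5
  rw [← integral_indicator (measurableSet_S ε)]
  exact h4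

lemma integrable_m (g : SchwartzMap ℝ ℂ) (t : ℝ) :
    Integrable (fun s : ℝ => cexp (Complex.I * s * t) * psi g s + g 0 * kf t s) := by
  apply Integrable.add
  · have h1 : Integrable (fun s : ℝ => cexp (Complex.I * s * t) * psiC g s) := by
      refine (integrable_psiC g).bdd_mul (c := 1) ?_ (Eventually.of_forall fun s => by rw [norm_cexp_Ist])
      exact (Continuous.aestronglyMeasurable (by fun_prop))
    refine h1.congr ?_
    filter_upwards [psi_ae g] with s hs
    rw [hs]
  · exact (integrable_kf t).const_mul _

/-- The key decomposition limit, for each fixed `t`. -/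
lemma key (g : SchwartzMap ℝ ℂ) (t : ℝ) :
    Tendsto (fun ε : ℝ =>
        ∫ s in {s : ℝ | ε ≤ |s|}, Complex.exp (Complex.I * s * t) * g s / s)
      (nhdsWithin 0 (Set.Ioi 0))
      (nhds ((∫ s : ℝ, cexp (Complex.I * s * t) * psi g s) + g 0 * ∫ s : ℝ, kf t s)) := by
  set m : ℝ → ℂ := fun s => cexp (Complex.I * s * t) * psi g s + g 0 * kf t s with hm
  have hmint : Integrable m := integrable_m g t
  have hmeq : ∫ s, m s
      = (∫ s : ℝ, cexp (Complex.I * s * t) * psi g s) + g 0 * ∫ s : ℝ, kf t s := by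
    have h1 : Integrable (fun s : ℝ => cexp (Complex.I * s * t) * psi g s) := by
      have := integrable_m g t
      have h2 := (integrable_kf t).const_mul (g 0)
      have := this.sub h2
      refine this.congr (Eventually.of_forall fun s => ?_)
      simp [hm]
    rw [integral_add h1 ((integrable_kf t).const_mul _), integral_const_mul]
  have hev : (fun ε : ℝ => ∫ s in {s : ℝ | ε ≤ |s|}, Complex.exp (Complex.I * s * t) * g s / s)
      =ᶠ[nhdsWithin (0:ℝ) (Set.Ioi 0)] (fun ε => ∫ s, (S ε).indicator m s) := by
    filter_upwards [self_mem_nhdsWithin] with ε hε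
    have hε0 : (0:ℝ) < ε := hε
    have hcongr : EqOn (fun s : ℝ => Complex.exp (Complex.I * s * t) * g s / s)
        (fun s => m s + g 0 * (cexp (-(s:ℂ)^2)/(s:ℂ))) (S ε) := by
      intro s hs
      have hs0 : s ≠ 0 := by
        intro h
        rw [h] at hs
        have : ε ≤ |(0:ℝ)| := hs
        simp at this; linarith
      have hsC : (s:ℂ) ≠ 0 := Complex.ofReal_ne_zero.mpr hs0
      simp only [hm, psi, kf]
      field_simp
      ring
    calc ∫ s in {s : ℝ | ε ≤ |s|}, Complex.exp (Complex.I * s * t) * g s / s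
        = ∫ s in S ε, (m s + g 0 * (cexp (-(s:ℂ)^2)/(s:ℂ))) :=
          setIntegral_congr_fun (measurableSet_S ε) hcongr
      _ = (∫ s in S ε, m s) + g 0 * ∫ s in S ε, cexp (-(s:ℂ)^2)/(s:ℂ) := by
          rw [integral_add hmint.integrableOn ((integrableOn_odd hε0).const_mul _),
            integral_const_mul]
      _ = ∫ s, (S ε).indicator m s := by
          rw [setIntegral_odd_zero hε0, mul_zero, add_zero,
            integral_indicator (measurableSet_S ε)]
  rw [← hmeq]
  refine Tendsto.congr' hev.symm ?_
  apply tendsto_integral_filter_of_dominated_convergence (bound := fun s => ‖m s‖)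
  · filter_upwards with ε
    exact hmint.aestronglyMeasurable.indicator (measurableSet_S ε)
  · filter_upwards with ε
    filter_upwards with s
    exact norm_indicator_le_norm_self m s
  · exact hmint.norm
  · filter_upwards [ae_ne_zero] with s hs
    have hmem : Ioo (0:ℝ) |s| ∈ nhdsWithin (0:ℝ) (Set.Ioi 0) :=
      Ioo_mem_nhdsGT_of_mem ⟨le_refl _, abs_pos.mpr hs⟩
    refine tendsto_const_nhds.congr' ?_
    filter_upwards [hmem] with ε hεs
    exact (indicator_of_mem (show s ∈ S ε from hεs.2.le) m).symm

/-- Riemann-Lebesgue part. -/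
lemma tendstoA (g : SchwartzMap ℝ ℂ) :
    Tendsto (fun t : ℝ => ∫ s : ℝ, cexp (Complex.I * s * t) * psi g s) atTop (nhds 0) := by
  have hRL := Real.tendsto_integral_exp_smul_cocompact (psiC g)
  have hw : Tendsto (fun t : ℝ => -(t / (2*π))) atTop (cocompact ℝ) := by
    rw [cocompact_eq_atBot_atTop]
    refine Tendsto.mono_right ?_ le_sup_left
    exact tendsto_neg_atTop_atBot.comp (tendsto_id.atTop_div_const (by positivity))
  have hcomp := hRL.comp hw
  refine Tendsto.congr ?_ hcomp
  intro t
  simp only [Function.comp]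
  have h1 : ∀ v : ℝ, (Real.fourierChar (-(v * -(t/(2*π))))) • psiC g v
      = cexp (Complex.I*v*t) * psiC g v := by
    intro v
    rw [Circle.smul_def, smul_eq_mul, Real.fourierChar_apply]
    congr 1
    have h2 : 2 * π * -(v * -(t / (2*π))) = v * t := by
      field_simp
    rw [h2]
    push_cast
    ring
  calc ∫ v : ℝ, (Real.fourierChar (-(v * -(t/(2*π))))) • psiC g v
      = ∫ v : ℝ, cexp (Complex.I*v*t) * psiC g v := by simp only [h1]
    _ = ∫ s : ℝ, cexp (Complex.I * s * t) * psi g s := by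
        apply integral_congr_ae
        filter_upwards [psi_ae g] with s hs
        rw [hs]

/-- Gaussian principal value part. -/
lemma tendstoC :
    Tendsto (fun t : ℝ => ∫ s : ℝ, kf t s) atTop
      (nhds (Complex.I * (↑π : ℂ)^(1/2:ℂ) * ((∫ u in Ioi (0:ℝ), rexp (-u^2/4) : ℝ) : ℂ))) := by
  have h3 : ∀ u : ℝ, (∫ s : ℝ, Complex.I * cexp (Complex.I*(s:ℂ)*(u:ℂ)) * cexp (-(s:ℂ)^2))
      = Complex.I * (↑π : ℂ)^(1/2:ℂ) * cexp (-(u:ℂ)^2/4) := by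
    intro u
    have hg := fourierIntegral_gaussian (b := (1:ℂ)) (by norm_num) (u:ℂ)
    calc ∫ s : ℝ, Complex.I * cexp (Complex.I*(s:ℂ)*(u:ℂ)) * cexp (-(s:ℂ)^2)
        = Complex.I * ∫ s : ℝ, cexp (Complex.I*(u:ℂ)*(s:ℂ)) * cexp (-(1:ℂ)*(s:ℂ)^2) := by
          rw [← integral_const_mul]
          apply integral_congr_ae
          filter_upwards with s
          rw [show Complex.I*(s:ℂ)*(u:ℂ) = Complex.I*(u:ℂ)*(s:ℂ) by ring,
            show -(s:ℂ)^2 = -(1:ℂ)*(s:ℂ)^2 by ring]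
          ring
      _ = Complex.I * (((↑π : ℂ)/1) ^ (1/2:ℂ) * cexp (-(u:ℂ)^2/(4*1))) := by rw [hg]
      _ = Complex.I * (↑π : ℂ)^(1/2:ℂ) * cexp (-(u:ℂ)^2/4) := by
          rw [div_one, mul_one, mul_assoc]
  have hform : ∀ t : ℝ, 0 < t → (∫ s : ℝ, kf t s)
      = Complex.I * (↑π : ℂ)^(1/2:ℂ) * ((∫ u in (0:ℝ)..t, rexp (-u^2/4) : ℝ) : ℂ) := by
    intro t ht
    have h1 : ∫ s : ℝ, kf t s
        = ∫ s : ℝ, ∫ u in Ioc (0:ℝ) t, (Complex.I * cexp (Complex.I*(s:ℂ)*(u:ℂ)) * cexp (-(s:ℂ)^2)) := by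
      apply integral_congr_ae
      filter_upwards [ae_ne_zero] with s hs
      rw [kf_eq_intervalIntegral t hs, intervalIntegral.integral_of_le ht.le]
    have hintProd : Integrable
        (Function.uncurry fun s u : ℝ => Complex.I * cexp (Complex.I*(s:ℂ)*(u:ℂ)) * cexp (-(s:ℂ)^2))
        (volume.prod (volume.restrict (Ioc 0 t))) := by
      have hmeas : AEStronglyMeasurable
          (Function.uncurry fun s u : ℝ => Complex.I * cexp (Complex.I*(s:ℂ)*(u:ℂ)) * cexp (-(s:ℂ)^2))
          (volume.prod (volume.restrict (Ioc 0 t))) := by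
        apply Continuous.aestronglyMeasurable
        unfold Function.uncurry
        fun_prop
      rw [integrable_prod_iff hmeas]
      constructor
      · filter_upwards with s
        exact Continuous.integrableOn_Ioc (by fun_prop)
      · have heq : (fun s : ℝ => ∫ u in Ioc (0:ℝ) t,
            ‖Complex.I * cexp (Complex.I*(s:ℂ)*(u:ℂ)) * cexp (-(s:ℂ)^2)‖)
            = fun s : ℝ => (volume (Ioc (0:ℝ) t)).toReal * rexp (-s^2) := by
          funext s
          have hn : ∀ u : ℝ, ‖Complex.I * cexp (Complex.I*(s:ℂ)*(u:ℂ)) * cexp (-(s:ℂ)^2)‖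
              = rexp (-s^2) := fun u => norm_aux s u
          simp only [hn]
          rw [setIntegral_const, smul_eq_mul]; rfl
        simp only [Function.uncurry_apply_pair]
        rw [heq]
        exact integrable_gauss.const_mul _
    have h2 := integral_integral_swap hintProd
    rw [h1, h2]
    simp only [h3]
    rw [integral_const_mul]
    have h4 : ∀ u : ℝ, cexp (-(u:ℂ)^2/4) = ((rexp (-u^2/4) : ℝ) : ℂ) := by
      intro u
      rw [Complex.ofReal_exp]
      congr 1
      push_cast
      ring
    simp_rw [h4]
    rw [intervalIntegral.integral_of_le ht.le]
    exact congrArg (fun z => Complex.I * (↑π : ℂ)^(1/2:ℂ) * z) integral_ofReal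
  have hJ : Tendsto (fun t : ℝ => ∫ u in (0:ℝ)..t, rexp (-u^2/4)) atTop
      (nhds (∫ u in Ioi (0:ℝ), rexp (-u^2/4))) :=
    intervalIntegral_tendsto_integral_Ioi 0 integrable_gauss4.integrableOn tendsto_id
  have hlim := ((Complex.continuous_ofReal.tendsto _).comp hJ).const_mul
    (Complex.I * (↑π : ℂ)^(1/2:ℂ))
  refine Tendsto.congr' ?_ hlim
  filter_upwards [eventually_gt_atTop (0:ℝ)] with t ht
  simp only [Function.comp]
  exact (hform t ht).symm

end PVDiv

end PVDivAux

open PVDiv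

/-- Polynomial divergence: if `g` is Schwartz with `g(0) ≠ 0`, `R ≥ 1`, and `P(t)` is
the principal value `lim_{ε→0⁺} ∫_{|s| ≥ ε} e^{ist} g(s)/s ds`, then
`|t^R ⬝ P(t)| → ∞` as `t → +∞`. -/
theorem pow_mul_principal_value_tendsto_atTop
    (g : SchwartzMap ℝ ℂ) (hg : g 0 ≠ 0) (R : ℕ) (hR : 1 ≤ R) (P : ℝ → ℂ)
    (hP : ∀ t : ℝ,
      Tendsto (fun ε : ℝ =>
          ∫ s in {s : ℝ | ε ≤ |s|}, Complex.exp (Complex.I * s * t) * g s / s)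
        (nhdsWithin 0 (Set.Ioi 0)) (nhds (P t))) :
    Tendsto (fun t : ℝ => ‖(t : ℂ) ^ R * P t‖) atTop atTop := by
  set L : ℂ := Complex.I * (↑π : ℂ)^(1/2:ℂ) * ((∫ u in Ioi (0:ℝ), rexp (-u^2/4) : ℝ) : ℂ) with hL
  have hPeq : ∀ t : ℝ, P t
      = (∫ s : ℝ, cexp (Complex.I * s * t) * psi g s) + g 0 * ∫ s : ℝ, kf t s :=
    fun t => tendsto_nhds_unique (hP t) (key g t)
  have hPlim : Tendsto P atTop (nhds (0 + g 0 * L)) := by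
    refine Tendsto.congr (fun t => (hPeq t).symm) ?_
    exact (tendstoA g).add ((tendstoC).const_mul (g 0))
  rw [zero_add] at hPlim
  have hLne : g 0 * L ≠ 0 := by
    apply mul_ne_zero hg
    apply mul_ne_zero (mul_ne_zero Complex.I_ne_zero ?_) ?_
    · intro h
      rcases (Complex.cpow_eq_zero_iff _ _).mp h with ⟨h1, -⟩
      exact Complex.ofReal_ne_zero.mpr Real.pi_ne_zero h1
    · rw [Ne, Complex.ofReal_eq_zero]
      have hJpos : 0 < ∫ u in Ioi (0:ℝ), rexp (-u^2/4) := by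
        have heq : (fun u : ℝ => rexp (-u^2/4)) = fun u : ℝ => rexp (-(1/4)*u^2) := by
          funext u; ring_nf
        rw [heq, integral_gaussian_Ioi]
        positivity
      exact ne_of_gt hJpos
  have hnorm : Tendsto (fun t : ℝ => ‖P t‖) atTop (nhds ‖g 0 * L‖) :=
    (continuous_norm.tendsto _).comp hPlim
  have hpow : Tendsto (fun t : ℝ => |t|^R) atTop atTop :=
    (tendsto_pow_atTop (by omega : R ≠ 0)).comp tendsto_abs_atTop_atTop
  have hmul := Filter.Tendsto.atTop_mul_pos (norm_pos_iff.mpr hLne) hpow hnorm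
  refine Tendsto.congr (fun t => ?_) hmul
  rw [norm_mul, norm_pow, Complex.norm_real, Real.norm_eq_abs]
end
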